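/- arXiv:1208.2297 — 5 statements merged into one kernel-verified Lean document; each statement's English description precedes it below -/
import Mathlib

section
/- Let ε be a real number with 0 < ε < 1. Then the series ∑_{k=0}^∞ ε^((3/2)^k) (real powers) is summable, and its sum satisfies ∑_{k=0}^∞ ε^((3/2)^k) ≤ ε/(1 − √ε). -/
/-- For `0 < ε < 1`, the series `∑_{k=0}^∞ ε^((3/2)^k)` (real powers)
is summable and its sum is at most `ε / (1 - √ε)`. -/
theorem stmt0 (ε : ℝ) (hε0 : 0 < ε) (hε1 : ε < 1) :
    Summable (fun k : ℕ => ε ^ ((3 / 2 : ℝ) ^ k)) ∧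
      (∑' k : ℕ, ε ^ ((3 / 2 : ℝ) ^ k)) ≤ ε / (1 - Real.sqrt ε) := by
  have hs0 : 0 ≤ Real.sqrt ε := Real.sqrt_nonneg ε
  have hs1 : Real.sqrt ε < 1 := by
    rw [show (1:ℝ) = Real.sqrt 1 by simp]
    exact Real.sqrt_lt_sqrt hε0.le hε1
  -- key pointwise bound
  have key : ∀ k : ℕ, ε ^ ((3 / 2 : ℝ) ^ k) ≤ ε * Real.sqrt ε ^ k := by
    intro k
    have h1 : (1 : ℝ) + k * (1/2) ≤ (3/2 : ℝ) ^ k := by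
      have := one_add_mul_le_pow (a := (1/2 : ℝ)) (by norm_num) k
      calc (1:ℝ) + k * (1/2) = 1 + k • (1/2 : ℝ) := by simp [nsmul_eq_mul]
        _ ≤ (1 + 1/2 : ℝ) ^ k := by simpa using this
        _ = (3/2 : ℝ) ^ k := by norm_num
    have hb : ε ^ ((3 / 2 : ℝ) ^ k) ≤ ε ^ ((1 : ℝ) + k * (1/2)) :=
      Real.rpow_le_rpow_of_exponent_ge hε0 hε1.le h1
    have he : ε ^ ((1 : ℝ) + k * (1/2)) = ε * Real.sqrt ε ^ k := by
      rw [Real.rpow_add hε0, Real.rpow_one, mul_comm (k:ℝ) (1/2 : ℝ),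
        Real.rpow_mul hε0.le, Real.rpow_natCast, ← Real.rpow_natCast (ε ^ (1/2 : ℝ)),
        ← Real.sqrt_eq_rpow]
      simp [Real.rpow_natCast]
    rw [he] at hb
    exact hb
  have hg : Summable (fun k : ℕ => ε * Real.sqrt ε ^ k) :=
    (summable_geometric_of_lt_one hs0 hs1).mul_left ε
  have hsum : Summable (fun k : ℕ => ε ^ ((3 / 2 : ℝ) ^ k)) :=
    Summable.of_nonneg_of_le (fun k => Real.rpow_nonneg hε0.le _) key hg
  refine ⟨hsum, ?_⟩
  calc (∑' k : ℕ, ε ^ ((3 / 2 : ℝ) ^ k)) ≤ ∑' k : ℕ, ε * Real.sqrt ε ^ k :=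
        Summable.tsum_le_tsum key hsum hg
    _ = ε * (1 - Real.sqrt ε)⁻¹ := by
        rw [tsum_mul_left, tsum_geometric_of_lt_one hs0 hs1]
    _ = ε / (1 - Real.sqrt ε) := (div_eq_mul_inv _ _).symm
end

section
/- Let n ≥ 2 be a natural number and let a : ℕ → ℝ be such that a j ≥ 0 for all j, a 1 ≤ 1, and for all j with 1 ≤ j ≤ n one has a j ≤ (a 1)^((n−j)/(n−1)) · (a n)^((j−1)/(n−1)) (real powers). Then for every composition of n−1, i.e. every finite list j_1, …, j_p of positive natural numbers with j_1 + ⋯ + j_p = n − 1, one has ∏_{k=1}^p a (j_k + 1) ≤ a n. -/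
/-- let `n ≥ 2` and `a : ℕ → ℝ` with `a j ≥ 0`, `a 1 ≤ 1`, and the
log-convexity (interpolation) bound
`a j ≤ (a 1)^((n-j)/(n-1)) · (a n)^((j-1)/(n-1))` for `1 ≤ j ≤ n` (real powers).
Then for every composition `j_1 + ⋯ + j_p = n - 1` of `n-1` into positive parts,
`∏_{k=1}^p a (j_k + 1) ≤ a n`. -/
theorem stmt7 (n : ℕ) (hn : 2 ≤ n) (a : ℕ → ℝ)
    (ha0 : ∀ j : ℕ, 0 ≤ a j) (ha1 : a 1 ≤ 1)
    (hint : ∀ j : ℕ, 1 ≤ j → j ≤ n →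
      a j ≤ (a 1) ^ (((n : ℝ) - (j : ℝ)) / ((n : ℝ) - 1)) *
            (a n) ^ (((j : ℝ) - 1) / ((n : ℝ) - 1))) :
    ∀ c : Composition (n - 1), (c.blocks.map (fun j => a (j + 1))).prod ≤ a n := by
  intro c
  have hn1 : (0:ℝ) < (n:ℝ) - 1 := by
    have : (2:ℝ) ≤ (n:ℝ) := by exact_mod_cast hn
    linarith
  have aux : ∀ l : List ℕ, (∀ j ∈ l, 1 ≤ j ∧ j < n) →
      (l.map fun j => a (j + 1)).prod ≤
        a 1 ^ ((l.map fun (j : ℕ) => ((n:ℝ) - ((j:ℝ)+1)) / ((n:ℝ) - 1)).sum) *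
        a n ^ ((l.map fun (j : ℕ) => (j:ℝ) / ((n:ℝ) - 1)).sum) := by
    intro l
    induction l with
    | nil => intro _; simp
    | cons j t ih =>
      intro hl
      have hj := hl j List.mem_cons_self
      have ht : ∀ x ∈ t, 1 ≤ x ∧ x < n := fun x hx => hl x (List.mem_cons_of_mem _ hx)
      have h1 : a (j+1) ≤ a 1 ^ (((n:ℝ) - ((j:ℝ)+1)) / ((n:ℝ) - 1)) *
          a n ^ ((j:ℝ) / ((n:ℝ) - 1)) := by
        have := hint (j+1) (by omega) (by omega)
        have hc : ((j+1 : ℕ) : ℝ) = (j:ℝ) + 1 := by push_cast; ring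
        rw [hc] at this
        simpa using this
      have e1 : (0:ℝ) ≤ ((n:ℝ) - ((j:ℝ)+1)) / ((n:ℝ) - 1) := by
        apply div_nonneg _ hn1.le
        have : (j:ℝ) + 1 ≤ (n:ℝ) := by
          have h : j + 1 ≤ n := by omega
          exact_mod_cast h
        linarith
      have e2 : (0:ℝ) ≤ (j:ℝ) / ((n:ℝ) - 1) := by positivity
      have e1t : (0:ℝ) ≤ (t.map fun (j : ℕ) => ((n:ℝ) - ((j:ℝ)+1)) / ((n:ℝ) - 1)).sum := by
        apply List.sum_nonneg
        intro x hx
        simp only [List.mem_map] at hx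
        obtain ⟨y, hy, rfl⟩ := hx
        apply div_nonneg _ hn1.le
        have h2 := (ht y hy).2
        have : (y:ℝ) + 1 ≤ (n:ℝ) := by
          have h : y + 1 ≤ n := by omega
          exact_mod_cast h
        linarith
      have e2t : (0:ℝ) ≤ (t.map fun (j : ℕ) => (j:ℝ) / ((n:ℝ) - 1)).sum := by
        apply List.sum_nonneg
        intro x hx
        simp only [List.mem_map] at hx
        obtain ⟨y, hy, rfl⟩ := hx
        positivity
      calc ((j :: t).map fun j => a (j + 1)).prod
          = a (j+1) * (t.map fun j => a (j + 1)).prod := by simp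
        _ ≤ (a 1 ^ (((n:ℝ) - ((j:ℝ)+1)) / ((n:ℝ) - 1)) * a n ^ ((j:ℝ) / ((n:ℝ) - 1))) *
            (a 1 ^ ((t.map fun (j : ℕ) => ((n:ℝ) - ((j:ℝ)+1)) / ((n:ℝ) - 1)).sum) *
             a n ^ ((t.map fun (j : ℕ) => (j:ℝ) / ((n:ℝ) - 1)).sum)) := by
            apply mul_le_mul h1 (ih ht) (List.prod_nonneg ?_) (mul_nonneg (Real.rpow_nonneg (ha0 1) _) (Real.rpow_nonneg (ha0 n) _))
            intro x hx
            simp only [List.mem_map] at hx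
            obtain ⟨y, _, rfl⟩ := hx
            exact ha0 _
        _ = a 1 ^ (((j :: t).map fun (j : ℕ) => ((n:ℝ) - ((j:ℝ)+1)) / ((n:ℝ) - 1)).sum) *
            a n ^ (((j :: t).map fun (j : ℕ) => (j:ℝ) / ((n:ℝ) - 1)).sum) := by
            rw [List.map_cons, List.sum_cons, List.map_cons, List.sum_cons,
              Real.rpow_add_of_nonneg (ha0 1) e1 e1t,
              Real.rpow_add_of_nonneg (ha0 n) e2 e2t]
            ring
  have hblocks : ∀ j ∈ c.blocks, 1 ≤ j ∧ j < n := by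
    intro j hj
    refine ⟨c.one_le_blocks hj, ?_⟩
    have h : j ≤ n - 1 := by
      calc j ≤ c.blocks.sum := List.single_le_sum (fun x _ => Nat.zero_le x) _ hj
        _ = n - 1 := c.blocks_sum
    omega
  have key := aux c.blocks hblocks
  have hsumdiv : ∀ l : List ℕ,
      (l.map fun (j : ℕ) => (j:ℝ) / ((n:ℝ) - 1)).sum = (l.sum : ℝ) / ((n:ℝ) - 1) := by
    intro l
    induction l with
    | nil => simp
    | cons x t ih =>
      simp only [List.map_cons, List.sum_cons, ih, List.sum_cons]
      push_cast
      ring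
  have hsum : ((c.blocks.map fun (j : ℕ) => (j:ℝ) / ((n:ℝ) - 1)).sum) = 1 := by
    rw [hsumdiv, c.blocks_sum]
    have h : ((n - 1 : ℕ) : ℝ) = (n:ℝ) - 1 := by
      have h1 : (1:ℕ) ≤ n := by omega
      push_cast [h1]
      ring
    rw [h, div_self hn1.ne']
  rw [hsum, Real.rpow_one] at key
  have hE : (0:ℝ) ≤ (c.blocks.map fun (j : ℕ) => ((n:ℝ) - ((j:ℝ)+1)) / ((n:ℝ) - 1)).sum := by
    apply List.sum_nonneg
    intro x hx
    simp only [List.mem_map] at hx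
    obtain ⟨y, hy, rfl⟩ := hx
    apply div_nonneg _ hn1.le
    have h2 := (hblocks y hy).2
    have : (y:ℝ) + 1 ≤ (n:ℝ) := by
      have h : y + 1 ≤ n := by omega
      exact_mod_cast h
    linarith
  have h1 : a 1 ^ ((c.blocks.map fun (j : ℕ) => ((n:ℝ) - ((j:ℝ)+1)) / ((n:ℝ) - 1)).sum) ≤ 1 :=
    Real.rpow_le_one (ha0 1) ha1 hE
  calc (c.blocks.map fun j => a (j + 1)).prod ≤ _ * a n := key
    _ ≤ 1 * a n := mul_le_mul_of_nonneg_right h1 (ha0 n)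
    _ = a n := one_mul _
end

section
/- Let b : ℕ → ℝ satisfy b j ≥ 0 for all j, and for a positive natural number N define Q N := ∑ over all compositions (j_1,…,j_p) of N (finite lists of positive natural numbers with sum N) of the product ∏_{k=1}^p b(j_k). Then for all positive natural numbers u, v: Q u · Q v ≤ Q (u + v). -/
set_option maxHeartbeats 1000000


/-- `Q b N` is the sum, over all compositions of `N` (finite lists of positive natural
numbers with sum `N`), of the product of `b` evaluated at the parts. -/
noncomputable def compSum (b : ℕ → ℝ) (N : ℕ) : ℝ :=
  ∑ c : Composition N, (c.blocks.map b).prod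

private lemma append_inj_of_sum_eq {l₁ l₂ l₁' l₂' : List ℕ}
    (h : l₁ ++ l₂ = l₁' ++ l₂') (hs : l₁.sum = l₁'.sum)
    (h₁ : ∀ x ∈ l₁, 0 < x) (h₁' : ∀ x ∈ l₁', 0 < x) :
    l₁ = l₁' ∧ l₂ = l₂' := by
  induction l₁ generalizing l₁' with
  | nil =>
    cases l₁' with
    | nil => simpa using h
    | cons a t =>
      exfalso
      have := h₁' a (by simp)
      simp at hs
      omega
  | cons a t ih =>
    cases l₁' with
    | nil =>
      exfalso
      have := h₁ a (by simp)
      simp at hs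
      omega
    | cons a' t' =>
      simp only [List.cons_append, List.cons.injEq] at h
      obtain ⟨rfl, h2⟩ := h
      simp only [List.sum_cons] at hs
      have hs' : t.sum = t'.sum := by omega
      obtain ⟨rfl, rfl⟩ := ih h2 hs' (fun x hx => h₁ x (by simp [hx]))
        (fun x hx => h₁' x (by simp [hx]))
      exact ⟨rfl, rfl⟩

/-- Concatenation of compositions. -/
def Composition.appendC {u v : ℕ} (c : Composition u) (d : Composition v) :
    Composition (u + v) :=
  ⟨c.blocks ++ d.blocks, by
    intro i hi
    rcases List.mem_append.1 hi with h | h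
    exacts [c.blocks_pos h, d.blocks_pos h],
    by simp [c.blocks_sum, d.blocks_sum]⟩

@[simp] lemma Composition.appendC_blocks {u v : ℕ} (c : Composition u) (d : Composition v) :
    (c.appendC d).blocks = c.blocks ++ d.blocks := rfl

/-- if `b j ≥ 0` for all `j`, then for all positive `u, v`:
`Q u · Q v ≤ Q (u + v)` where `Q N := ∑_{compositions of N} ∏ b(parts)`. -/
theorem stmt8 (b : ℕ → ℝ) (hb : ∀ j : ℕ, 0 ≤ b j) :
    ∀ u v : ℕ, 0 < u → 0 < v → compSum b u * compSum b v ≤ compSum b (u + v) := by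
  intro u v hu hv
  classical
  set g : Composition u × Composition v → Composition (u + v) :=
    fun p => p.1.appendC p.2 with hg
  have hginj : Function.Injective g := by
    rintro ⟨c, d⟩ ⟨c', d'⟩ h
    have hblocks : c.blocks ++ d.blocks = c'.blocks ++ d'.blocks :=
      congrArg Composition.blocks h
    have hs : c.blocks.sum = c'.blocks.sum := by
      rw [c.blocks_sum, c'.blocks_sum]
    obtain ⟨h1, h2⟩ := append_inj_of_sum_eq hblocks hs
      (fun x hx => c.blocks_pos hx) (fun x hx => c'.blocks_pos hx)
    have : c = c' := by ext1; exact h1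
    subst this
    have : d = d' := by ext1; exact h2
    subst this
    rfl
  have key : compSum b u * compSum b v
      = ∑ p : Composition u × Composition v, (((g p).blocks.map b).prod) := by
    rw [compSum, compSum, Finset.sum_mul_sum, ← Finset.univ_product_univ,
      Finset.sum_product]
    refine Finset.sum_congr rfl fun p _ => ?_
    simp only [hg, Composition.appendC_blocks, List.map_append, List.prod_append]
  rw [key]
  calc ∑ p : Composition u × Composition v, (((g p).blocks.map b).prod)
      = ∑ c ∈ Finset.univ.image g, (c.blocks.map b).prod :=
        by rw [Finset.sum_image (fun x _ y _ h => hginj h)]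
    _ ≤ ∑ c : Composition (u + v), (c.blocks.map b).prod := by
        apply Finset.sum_le_sum_of_subset_of_nonneg (Finset.subset_univ _)
        intro c _ _
        apply List.prod_nonneg
        intro x hx
        obtain ⟨j, _, rfl⟩ := List.mem_map.1 hx
        exact hb j
    _ = compSum b (u + v) := rfl
end

section
/- Let K be a field, U and V vector spaces over K, and f : U → V a K-linear map. Let Φ : ⋀²U → V ⊗ U be the unique K-linear map on the second exterior power with Φ(u ∧ w) = f(u) ⊗ w − f(w) ⊗ u for all u, w ∈ U. Then the kernel of Φ equals the image of the map ⋀²(ker f) → ⋀²U induced by the inclusion ker f ↪ U; i.e. ker Φ = ⋀²(ker f) viewed inside ⋀²U. -/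
open scoped TensorProduct

section Aux

variable {K U V : Type*} [Field K] [AddCommGroup U] [Module K U] [AddCommGroup V] [Module K V]

/-- The wedge of two vectors as an element of `⋀[K]^2 U`. -/
noncomputable def stmt9Wedge (K : Type*) {U : Type*} [Field K] [AddCommGroup U] [Module K U]
    (u w : U) : ⋀[K]^2 U :=
  ⟨ExteriorAlgebra.ιMulti K 2 ![u, w], ExteriorAlgebra.ιMulti_range K 2 (Set.mem_range_self _)⟩

lemma stmt9Wedge_swap (u w : U) : stmt9Wedge K w u = - stmt9Wedge K u w := by
  have h : (![w, u] : Fin 2 → U) = ![u, w] ∘ Equiv.swap 0 1 := by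
    funext i; fin_cases i <;> simp
  apply Subtype.ext
  simp only [stmt9Wedge, h]
  rw [AlternatingMap.map_swap _ _ (by decide)]
  rfl

lemma stmt9Wedge_diag (u : U) : stmt9Wedge K u u = 0 := by
  apply Subtype.ext
  simp only [stmt9Wedge]
  rw [AlternatingMap.map_eq_zero_of_eq _ _ (i := 0) (j := 1) rfl (by decide)]
  rfl

/-- Bilinear wedge into the exterior algebra. -/
noncomputable def stmt9B (K U : Type*) [Field K] [AddCommGroup U] [Module K U] :
    U →ₗ[K] U →ₗ[K] ExteriorAlgebra K U :=
  (LinearMap.mul K _).compl₁₂ (ExteriorAlgebra.ι K) (ExteriorAlgebra.ι K)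

lemma stmt9B_apply (u w : U) : stmt9B K U u w = ExteriorAlgebra.ιMulti K 2 ![u, w] := by
  simp [stmt9B, ExteriorAlgebra.ιMulti_succ_apply, ExteriorAlgebra.ιMulti_zero_apply,
    Matrix.vecTail]

lemma stmt9_span_pairs {I : Type*} (b : Module.Basis I K U) (z : ExteriorAlgebra K U)
    (hz : z ∈ (⋀[K]^2 U)) :
    z ∈ Submodule.span K (Set.range fun p : I × I =>
      (ExteriorAlgebra.ιMulti K 2 ![b p.1, b p.2] : ExteriorAlgebra K U)) := by
  rw [← ExteriorAlgebra.ιMulti_span_fixedDegree] at hz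
  refine Submodule.span_le.mpr ?_ hz
  rintro _ ⟨v, rfl⟩
  have hv : (v : Fin 2 → U) = ![v 0, v 1] := by funext i; fin_cases i <;> simp
  have h : ExteriorAlgebra.ιMulti K 2 v = stmt9B K U (v 0) (v 1) := by
    rw [stmt9B_apply]; exact congrArg _ hv
  rw [h]
  have h1 : v 0 ∈ Submodule.span K (Set.range ⇑b) := by rw [b.span_eq]; trivial
  have h2 : v 1 ∈ Submodule.span K (Set.range ⇑b) := by rw [b.span_eq]; trivial
  have hm := Submodule.apply_mem_map₂ (stmt9B K U) h1 h2
  rw [Submodule.map₂_span_span] at hm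
  refine Submodule.span_mono ?_ hm
  rintro _ ⟨_, ⟨i, rfl⟩, _, ⟨j, rfl⟩, rfl⟩
  exact ⟨(i, j), (stmt9B_apply _ _).symm⟩

lemma stmt9_map_ιMulti2 {N : Submodule K U} (n₁ n₂ : N) :
    (ExteriorAlgebra.map N.subtype).toLinearMap (ExteriorAlgebra.ιMulti K 2 ![n₁, n₂])
      = ExteriorAlgebra.ιMulti K 2 ![(n₁ : U), n₂] := by
  simp [ExteriorAlgebra.ιMulti_succ_apply, ExteriorAlgebra.ιMulti_zero_apply, Matrix.vecTail,
    ExteriorAlgebra.map_apply_ι]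

/-- Wedges of elements of `N` lie in the image of `⋀²N`. -/
lemma stmt9Wedge_mem_map {N : Submodule K U} {u w : U} (hu : u ∈ N) (hw : w ∈ N) :
    ((stmt9Wedge K u w : ⋀[K]^2 U) : ExteriorAlgebra K U) ∈
      Submodule.map (ExteriorAlgebra.map N.subtype).toLinearMap (⋀[K]^2 N) := by
  refine ⟨ExteriorAlgebra.ιMulti K 2 ![⟨u, hu⟩, ⟨w, hw⟩],
    ExteriorAlgebra.ιMulti_range K 2 (Set.mem_range_self _), ?_⟩
  rw [stmt9_map_ιMulti2]
  rfl

open scoped Classical in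
lemma stmt9_exists_dual_family {ι : Type*} {v : ι → V} (hv : LinearIndependent K v) :
    ∃ φ : ι → (V →ₗ[K] K), ∀ k k', φ k (v k') = if k' = k then 1 else 0 := by
  set S := Submodule.span K (Set.range v)
  obtain ⟨S', hS'⟩ := Submodule.exists_isCompl S
  set bS := Module.Basis.span hv
  refine ⟨fun k => (bS.coord k).comp (S.linearProjOfIsCompl S' hS'), fun k k' => ?_⟩
  have h1 : v k' = ↑(bS k') := (congrArg Subtype.val (Module.Basis.span_apply hv k')).symm
  simp only [LinearMap.comp_apply, h1, Submodule.projectionOnto_apply_left]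
  erw [Submodule.projectionOnto_apply_left hS' (bS k')]
  simp [Module.Basis.coord_apply, Finsupp.single_apply]

lemma stmt9_ite (K : Type*) [Field K] (A B C D : Prop) [Decidable A] [Decidable B]
    [Decidable C] [Decidable D] :
    (if A then (1 : K) else 0) * (if B then 1 else 0)
      - (if C then 1 else 0) * (if D then 1 else 0)
    = (if A ∧ B then 1 else 0) - (if D ∧ C then 1 else 0) := by
  by_cases hA : A <;> by_cases hB : B <;> by_cases hC : C <;> by_cases hD : D <;>
    simp [hA, hB, hC, hD]

end Aux

set_option maxHeartbeats 2000000 in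
/-- let `f : U →ₗ[K] V` and let `Φ : ⋀²U →ₗ[K] V ⊗ U` be the (unique) linear
map with `Φ (u ∧ w) = f u ⊗ w - f w ⊗ u`. Then `ker Φ` is the image of `⋀²(ker f)` in
`⋀²U` under the map induced by the inclusion `ker f ↪ U`. -/
theorem stmt9 (K U V : Type*) [Field K] [AddCommGroup U] [Module K U]
    [AddCommGroup V] [Module K V] (f : U →ₗ[K] V)
    (Φ : (⋀[K]^2 U) →ₗ[K] V ⊗[K] U)
    (hΦ : ∀ u w : U,
      Φ ⟨ExteriorAlgebra.ιMulti K 2 ![u, w],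
          ExteriorAlgebra.ιMulti_range K 2 (Set.mem_range_self _)⟩ =
        f u ⊗ₜ[K] w - f w ⊗ₜ[K] u) :
    LinearMap.ker Φ =
      Submodule.comap (⋀[K]^2 U).subtype
        (Submodule.map (ExteriorAlgebra.map (LinearMap.ker f).subtype).toLinearMap
          (⋀[K]^2 (LinearMap.ker f))) := by
  classical
  set N := LinearMap.ker f with hN
  set g := (ExteriorAlgebra.map N.subtype).toLinearMap with hg
  have hΦw : ∀ u w : U, Φ (stmt9Wedge K u w) = f u ⊗ₜ[K] w - f w ⊗ₜ[K] u := hΦ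
  -- easy inclusion: image of ⋀²N is in the kernel
  have easy : Submodule.comap (⋀[K]^2 U).subtype (Submodule.map g (⋀[K]^2 N))
      ≤ LinearMap.ker Φ := by
    intro x hx
    have hx' : (x : ExteriorAlgebra K U) ∈ Submodule.map g (⋀[K]^2 N) := hx
    have hle : Submodule.map g (⋀[K]^2 N) ≤
        Submodule.map (⋀[K]^2 U).subtype (LinearMap.ker Φ) := by
      rw [← ExteriorAlgebra.ιMulti_span_fixedDegree (R := K) (M := N), Submodule.map_span,
        Submodule.span_le]
      rintro _ ⟨_, ⟨v, rfl⟩, rfl⟩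
      have hv : (v : Fin 2 → N) = ![v 0, v 1] := by funext i; fin_cases i <;> simp
      refine ⟨stmt9Wedge K (v 0 : U) (v 1 : U), ?_, ?_⟩
      · simp only [SetLike.mem_coe, LinearMap.mem_ker, hΦw]
        have h0 : f ((v 0 : U)) = 0 := (v 0).2
        have h1 : f ((v 1 : U)) = 0 := (v 1).2
        rw [h0, h1, TensorProduct.zero_tmul, TensorProduct.zero_tmul, sub_zero]
      · have h2 := stmt9_map_ιMulti2 (N := N) (v 0) (v 1)
        rw [← hv] at h2
        exact h2.symm
    obtain ⟨y, hy, hyx⟩ := hle hx'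
    rwa [show y = x from Subtype.ext hyx] at hy
  refine le_antisymm ?_ easy
  -- hard inclusion
  intro x hxker
  have hΦx : Φ x = 0 := hxker
  -- set up an adapted basis
  obtain ⟨W, hcompl⟩ := Submodule.exists_isCompl N
  set b₀ := Module.Basis.ofVectorSpace K N
  set b₁ := Module.Basis.ofVectorSpace K W
  set e := Submodule.prodEquivOfIsCompl N W hcompl
  set I := (Module.Basis.ofVectorSpaceIndex K N ⊕ Module.Basis.ofVectorSpaceIndex K W : Type _) with hI
  set b : Module.Basis I K U := (b₀.prod b₁).map e with hb
  have hbl : ∀ i, b (Sum.inl i) = (b₀ i : U) := by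
    intro i
    rw [hb, Module.Basis.map_apply, Submodule.coe_prodEquivOfIsCompl',
      Module.Basis.prod_apply_inl_fst, Module.Basis.prod_apply_inl_snd]
    simp
  have hbr : ∀ j, b (Sum.inr j) = (b₁ j : U) := by
    intro j
    rw [hb, Module.Basis.map_apply, Submodule.coe_prodEquivOfIsCompl',
      Module.Basis.prod_apply_inr_fst, Module.Basis.prod_apply_inr_snd]
    simp
  have hf0 : ∀ i, f (b (Sum.inl i)) = 0 := by
    intro i; rw [hbl]; exact (b₀ i).2
  -- independence of the images of the complement basis
  have hinj : LinearMap.ker (f ∘ₗ W.subtype) = ⊥ := by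
    rw [LinearMap.ker_eq_bot']
    intro w hw
    have hwN : (w : U) ∈ N := hw
    have : (w : U) ∈ N ⊓ W := ⟨hwN, w.2⟩
    rw [hcompl.inf_eq_bot] at this
    exact Subtype.ext this
  set v : Module.Basis.ofVectorSpaceIndex K W → V := fun j => f (b (Sum.inr j)) with hvdef
  have hv : LinearIndependent K v := by
    have h1 : v = (f ∘ₗ W.subtype) ∘ b₁ := by
      funext j; simp [hvdef, hbr]
    rw [h1]
    exact b₁.linearIndependent.map' _ hinj
  obtain ⟨φ, hφ⟩ := stmt9_exists_dual_family hv
  -- coordinate functionals on V ⊗ U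
  set ε : Module.Basis.ofVectorSpaceIndex K W → I → (V ⊗[K] U →ₗ[K] K) := fun k m =>
    TensorProduct.lift ((LinearMap.mul K K).compl₁₂ (φ k) (b.coord m)) with hε
  have hεtmul : ∀ k m (a : V) (u : U), ε k m (a ⊗ₜ[K] u) = φ k a * b.coord m u := by
    intro k m a u; simp [hε]
  -- decompose x
  set P : I × I → (⋀[K]^2 U) := fun p => stmt9Wedge K (b p.1) (b p.2) with hP
  have hxspan : x ∈ Submodule.span K (Set.range P) := by
    have hz := stmt9_span_pairs b (x : ExteriorAlgebra K U) x.2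
    have hrange : (Set.range fun p : I × I =>
        (ExteriorAlgebra.ιMulti K 2 ![b p.1, b p.2] : ExteriorAlgebra K U))
        = (⋀[K]^2 U).subtype '' Set.range P := by
      rw [← Set.range_comp]; rfl
    rw [hrange, ← Submodule.map_span] at hz
    obtain ⟨y, hy, hyx⟩ := hz
    rwa [show y = x from Subtype.ext hyx] at hy
  rw [Finsupp.mem_span_range_iff_exists_finsupp] at hxspan
  obtain ⟨c, hc⟩ := hxspan
  set pred : I × I → Prop := fun p => p.1.isLeft ∧ p.2.isLeft with hpred
  set c₀ := c.filter pred with hc₀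
  set c₁ := c.filter (fun p => ¬ pred p) with hc₁
  have hsplit : (c₀.sum fun p r => r • P p) + (c₁.sum fun p r => r • P p) = x := by
    rw [← Finsupp.sum_add_index' (fun p => zero_smul K (P p)) (fun p r s => add_smul r s (P p)),
      Finsupp.filter_pos_add_filter_neg]
    exact hc
  -- the "both in N" part lies in the image of ⋀²N
  have haS : (c₀.sum fun p r => r • P p) ∈
      Submodule.comap (⋀[K]^2 U).subtype (Submodule.map g (⋀[K]^2 N)) := by
    rw [Finsupp.sum]
    refine Submodule.sum_mem _ ?_
    intro p hp
    have hp' : pred p := by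
      rw [hc₀, Finsupp.support_filter] at hp
      exact (Finset.mem_filter.mp hp).2
    obtain ⟨hL, hR⟩ := hp'
    obtain ⟨i, hi⟩ := Sum.isLeft_iff.mp hL
    obtain ⟨j, hj⟩ := Sum.isLeft_iff.mp hR
    refine Submodule.smul_mem _ _ ?_
    rw [Submodule.mem_comap]
    show ((P p : ⋀[K]^2 U) : ExteriorAlgebra K U) ∈ _
    simp only [hP]
    refine stmt9Wedge_mem_map ?_ ?_
    · rw [hi, hbl]; exact (b₀ i).2
    · rw [hj, hbl]; exact (b₀ j).2
  have hΦa : Φ (c₀.sum fun p r => r • P p) = 0 := easy haS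
  have hΦy : Φ (c₁.sum fun p r => r • P p) = 0 := by
    have h := congrArg Φ hsplit
    rw [map_add, hΦa, zero_add, hΦx] at h
    exact h
  -- dual-basis computations
  have hφf : ∀ (k) (i : I), φ k (f (b i)) = if i = Sum.inr k then (1 : K) else 0 := by
    rintro k (i | i)
    · rw [hf0, map_zero, eq_comm, if_neg (by simp)]
    · have h : f (b (Sum.inr i)) = v i := rfl
      rw [h, hφ k i]
      by_cases h' : i = k
      · subst h'; rw [if_pos rfl, if_pos rfl]
      · rw [if_neg h', if_neg (fun hh => h' (by injection hh))]
  have hcoord : ∀ (m j : I), b.coord m (b j) = if j = m then (1 : K) else 0 := by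
    intro m j; rw [Module.Basis.coord_apply, Module.Basis.repr_self, Finsupp.single_apply]
  have hεP : ∀ k m (p : I × I), ε k m (Φ (P p)) =
      (if p = (Sum.inr k, m) then (1 : K) else 0)
        - (if p = (m, Sum.inr k) then (1 : K) else 0) := by
    intro k m p
    simp only [hP]
    rw [hΦw, map_sub, hεtmul, hεtmul, hφf, hφf, hcoord, hcoord]
    obtain ⟨p1, p2⟩ := p
    rw [stmt9_ite]
    simp [Prod.mk.injEq]
  have key : ∀ k m, c₁ (Sum.inr k, m) = c₁ (m, Sum.inr k) := by
    intro k m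
    have h0 : (∑ p ∈ c₁.support, c₁ p * (ε k m (Φ (P p)))) = 0 := by
      have h1 : (∑ p ∈ c₁.support, c₁ p * (ε k m (Φ (P p))))
          = ε k m (Φ (c₁.sum fun p r => r • P p)) := by
        rw [Finsupp.sum, map_sum, map_sum]
        exact Finset.sum_congr rfl fun p _ => by rw [map_smul, map_smul, smul_eq_mul]
      rw [h1, hΦy, map_zero]
    have h2 : ∀ p ∈ c₁.support, c₁ p * (ε k m (Φ (P p)))
        = (if p = (Sum.inr k, m) then c₁ p else 0)
          - (if p = (m, Sum.inr k) then c₁ p else 0) := by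
      intro p _
      rw [hεP, mul_sub, mul_ite, mul_one, mul_zero, mul_ite, mul_one, mul_zero]
    rw [Finset.sum_congr rfl h2, Finset.sum_sub_distrib,
      Finset.sum_ite_eq' c₁.support (Sum.inr k, m) c₁,
      Finset.sum_ite_eq' c₁.support (m, Sum.inr k) c₁] at h0
    have e1 : (if (Sum.inr k, m) ∈ c₁.support then c₁ (Sum.inr k, m) else 0)
        = c₁ (Sum.inr k, m) := by
      split_ifs with h
      · rfl
      · exact (Finsupp.notMem_support_iff.mp h).symm
    have e2 : (if (m, Sum.inr k) ∈ c₁.support then c₁ (m, Sum.inr k) else 0)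
        = c₁ (m, Sum.inr k) := by
      split_ifs with h
      · rfl
      · exact (Finsupp.notMem_support_iff.mp h).symm
    rw [e1, e2, sub_eq_zero] at h0
    exact h0
  have csymm : ∀ p : I × I, c₁ p = c₁ p.swap := by
    rintro ⟨p1, p2⟩
    rcases p1 with i | k
    · rcases p2 with j | k
      · have h1 : c₁ (Sum.inl i, Sum.inl j) = 0 := by
          rw [hc₁, Finsupp.filter_apply]
          simp [hpred]
        have h2 : c₁ (Sum.inl j, Sum.inl i) = 0 := by
          rw [hc₁, Finsupp.filter_apply]
          simp [hpred]
        simp [h1, h2]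
      · exact (key k (Sum.inl i)).symm
    · exact key k p2
  have hy0 : (c₁.sum fun p r => r • P p) = 0 := by
    rw [Finsupp.sum]
    refine Finset.sum_involution (fun p _ => p.swap) ?_ ?_ ?_ ?_
    · intro p hp
      have hswapP : P p.swap = - P p := by
        obtain ⟨p1, p2⟩ := p
        exact stmt9Wedge_swap _ _
      rw [← csymm p, hswapP, smul_neg, add_neg_cancel]
    · intro p hp hne hsw
      apply hne
      have h12 : p.2 = p.1 := congrArg Prod.fst hsw
      have hPp : P p = 0 := by
        simp only [hP]
        rw [← h12]
        exact stmt9Wedge_diag _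
      rw [hPp, smul_zero]
    · intro p hp
      rw [Finsupp.mem_support_iff] at hp ⊢
      rwa [← csymm]
    · intro p hp
      exact Prod.swap_swap p
  rw [← hsplit, hy0, add_zero]
  exact haS
end

section
/- Let E be a real normed vector space, let 0 ≤ s < r and M ≥ 0 be reals with M ≤ r − s. Let γ : ℝ → E be continuous on [0,1] and differentiable at every t ∈ [0,1] (one-sided at the endpoints), with derivative γ'(t) satisfying ‖γ'(t)‖ ≤ M for every t ∈ [0,1] such that ‖γ(t)‖ ≤ r. If ‖γ(0)‖ ≤ s, then for every t ∈ [0,1] one has ‖γ(t)‖ ≤ s + M·t; in particular γ(t) lies in the closed ball of radius r for all t ∈ [0,1]. -/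
/-- escape-time estimate. Let `0 ≤ s < r`, `0 ≤ M ≤ r - s`, and let
`γ : ℝ → E` be continuous on `[0,1]` and differentiable (within `[0,1]`, so one-sided at the
endpoints) with derivative `γ'` satisfying `‖γ' t‖ ≤ M` whenever `t ∈ [0,1]` and `‖γ t‖ ≤ r`.
If `‖γ 0‖ ≤ s`, then `‖γ t‖ ≤ s + M·t` for all `t ∈ [0,1]`; in particular `γ t` lies in the
closed ball of radius `r`. -/
theorem stmt11 (E : Type*) [NormedAddCommGroup E] [NormedSpace ℝ E]
    (s r M : ℝ) (hs : 0 ≤ s) (hsr : s < r) (hM : 0 ≤ M) (hMrs : M ≤ r - s)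
    (γ γ' : ℝ → E)
    (hcont : ContinuousOn γ (Set.Icc 0 1))
    (hderiv : ∀ t ∈ Set.Icc (0 : ℝ) 1, HasDerivWithinAt γ (γ' t) (Set.Icc 0 1) t)
    (hbound : ∀ t ∈ Set.Icc (0 : ℝ) 1, ‖γ t‖ ≤ r → ‖γ' t‖ ≤ M)
    (h0 : ‖γ 0‖ ≤ s) :
    ∀ t ∈ Set.Icc (0 : ℝ) 1, ‖γ t‖ ≤ s + M * t ∧ γ t ∈ Metric.closedBall (0 : E) r := by
  set S : Set ℝ := {t | t ∈ Set.Icc (0 : ℝ) 1 ∧ ∀ u ∈ Set.Icc (0 : ℝ) t, ‖γ u‖ ≤ r} with hS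
  have h0S : (0 : ℝ) ∈ S := by
    refine ⟨⟨le_refl 0, zero_le_one⟩, fun u hu => ?_⟩
    have : u = 0 := le_antisymm hu.2 hu.1
    rw [this]; exact h0.trans hsr.le
  have hbdd : BddAbove S := ⟨1, fun t ht => ht.1.2⟩
  set T := sSup S with hT
  have hT0 : 0 ≤ T := le_csSup hbdd h0S
  have hT1 : T ≤ 1 := csSup_le ⟨0, h0S⟩ fun t ht => ht.1.2
  have hTmem : T ∈ Set.Icc (0 : ℝ) 1 := ⟨hT0, hT1⟩
  -- γ stays within r on [0, T)
  have hlt : ∀ u ∈ Set.Ico (0 : ℝ) T, ‖γ u‖ ≤ r := by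
    intro u hu
    obtain ⟨t, htS, hut⟩ := exists_lt_of_lt_csSup ⟨0, h0S⟩ hu.2
    exact htS.2 u ⟨hu.1, hut.le⟩
  -- and ‖γ T‖ ≤ r by continuity
  have hTS : T ∈ S := by
    refine ⟨hTmem, fun u hu => ?_⟩
    rcases lt_or_eq_of_le hu.2 with h | h
    · exact hlt u ⟨hu.1, h⟩
    · rw [h]
      rcases eq_or_lt_of_le hT0 with h0T | h0T
      · rw [← h0T]; exact h0.trans hsr.le
      · -- T is in closure of [0,T)
        have hcl : ContinuousWithinAt γ (Set.Icc 0 1) T := hcont T hTmem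
        have hcl' : ContinuousWithinAt γ (Set.Ico 0 T) T :=
          hcl.mono (fun x hx => ⟨hx.1, hx.2.le.trans hT1⟩)
        have hmem : T ∈ closure (Set.Ico (0:ℝ) T) := by
          rw [closure_Ico (by exact h0T.ne)]
          exact ⟨hT0, le_refl T⟩
        haveI : (nhdsWithin T (Set.Ico 0 T)).NeBot :=
          mem_closure_iff_nhdsWithin_neBot.mp hmem
        have hval : ‖γ T‖ ∈ closure (Set.Iic r) := by
          have htend : Filter.Tendsto (fun x => ‖γ x‖) (nhdsWithin T (Set.Ico 0 T))
              (nhds ‖γ T‖) := (continuous_norm.continuousAt.tendsto.comp hcl')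
          refine mem_closure_of_tendsto htend ?_
          filter_upwards [self_mem_nhdsWithin] with x hx using hlt x hx
        rwa [closure_Iic] at hval
  -- mean value inequality on [0, T]
  have hsub : Set.Icc (0:ℝ) T ⊆ Set.Icc 0 1 := Set.Icc_subset_Icc le_rfl hT1
  have hest : ∀ t ∈ Set.Icc (0:ℝ) T, ‖γ t - γ 0‖ ≤ M * (t - 0) := by
    refine norm_image_sub_le_of_norm_deriv_le_segment'
      (fun x hx => (hderiv x (hsub hx)).mono hsub) (fun x hx => ?_)
    have hx' : x ∈ Set.Icc (0:ℝ) T := ⟨hx.1, hx.2.le⟩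
    exact hbound x (hsub hx') (hTS.2 x ⟨hx.1, hx.2.le⟩)
  have hestT : ∀ t ∈ Set.Icc (0:ℝ) T, ‖γ t‖ ≤ s + M * t := by
    intro t ht
    have := hest t ⟨ht.1, ht.2⟩
    calc ‖γ t‖ ≤ ‖γ 0‖ + ‖γ t - γ 0‖ := by
          have := norm_sub_norm_le (γ t) (γ 0); linarith [norm_add_le (γ 0) (γ t - γ 0),
            (by abel : γ 0 + (γ t - γ 0) = γ t)] 
      _ ≤ s + M * t := by rw [sub_zero] at this; linarith
  -- show T = 1
  have hTeq : T = 1 := by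
    by_contra h
    have hTlt : T < 1 := lt_of_le_of_ne hT1 h
    have hγT : ‖γ T‖ < r := by
      have := hestT T ⟨hT0, le_rfl⟩
      rcases eq_or_lt_of_le hM with hM0 | hM0
      · rw [← hM0] at this; simp only [zero_mul, add_zero] at this; linarith
      · nlinarith
    have hcw : ContinuousWithinAt γ (Set.Icc 0 1) T := hcont T hTmem
    have hev : ∀ᶠ u in nhdsWithin T (Set.Icc 0 1), ‖γ u‖ < r := by
      have : {x : E | ‖x‖ < r} ∈ nhds (γ T) :=
        (isOpen_lt continuous_norm continuous_const).mem_nhds hγT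
      exact hcw this
    rw [Filter.Eventually, Metric.mem_nhdsWithin_iff] at hev
    obtain ⟨ε, hε, hball⟩ := hev
    set t' := min (T + ε / 2) 1 with ht'
    have ht'T : T < t' := lt_min (by linarith) hTlt
    have ht'S : t' ∈ S := by
      refine ⟨⟨hT0.trans ht'T.le, min_le_right _ _⟩, fun u hu => ?_⟩
      rcases le_or_gt u T with h | h
      · exact hTS.2 u ⟨hu.1, h⟩
      · have hu1 : u ≤ 1 := hu.2.trans (min_le_right _ _)
        have : dist u T < ε := by
          rw [Real.dist_eq, abs_of_pos (by linarith)]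
          have := hu.2.trans (min_le_left _ _)
          linarith
        exact (hball ⟨Metric.mem_ball.mpr this, ⟨hu.1, hu1⟩⟩).le
    exact absurd (le_csSup hbdd ht'S) (not_le.mpr ht'T)
  intro t ht
  have h1 : ‖γ t‖ ≤ s + M * t := hestT t (by rw [hTeq]; exact ht)
  refine ⟨h1, ?_⟩
  rw [Metric.mem_closedBall, dist_zero_right]
  nlinarith [ht.2, ht.1, h1]
end
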